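/- Every n-tree T admits a unique maximal pruned subtree T^(p), and the assignment T ↦ T^(p) with counit i^(p) : T^(p) → T extends to an idempotent comonad on Ω_n, i.e., (T^(p))^(p) = T^(p). -/
import Mathlib


/-- An `n`-tree: a chain of order-preserving maps of finite ordinals
`[k_n] → [k_{n-1}] → ⋯ → [k_0] = [1]`.  We record the size of each level as a
function `ℕ → ℕ` which is `0` above level `n`, together with the monotone
structure maps `ρ`. -/
structure NTree (n : ℕ) where
  level : ℕ → ℕ
  level_zero : level 0 = 1
  level_top : ∀ i, n < i → level i = 0
  ρ : ∀ i, Fin (level (i + 1)) → Fin (level i)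
  mono : ∀ i, Monotone (ρ i)

/-- `i` is a leaf of `T` of height `m`: it lies in level `m` and has no
preimage under the structure map `ρ m`.  (Leaves of height `n` are the tips.) -/
def NTree.IsLeafAt {n : ℕ} (T : NTree n) (m i : ℕ) : Prop :=
  i < T.level m ∧ ∀ j : Fin (T.level (m + 1)), ((T.ρ m j : ℕ) ≠ i)

/-- A morphism of `n`-trees in the category `Ω_n`: a commutative ladder of maps
(not necessarily order-preserving) which is order-preserving on each fiber of
the structure maps of the source. -/
structure TreeHom {n : ℕ} (T S : NTree n) where
  app : ∀ i, Fin (T.level i) → Fin (S.level i)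
  comm : ∀ i (x : Fin (T.level (i + 1))), S.ρ i (app (i + 1) x) = app i (T.ρ i x)
  fiberMono : ∀ i (x y : Fin (T.level (i + 1))),
    T.ρ i x = T.ρ i y → x ≤ y → app (i + 1) x ≤ app (i + 1) y

/-- A subtree of an `n`-tree `T` is given by subsets of each level which are
closed under the structure maps. -/
def IsClosedSub {n : ℕ} (T : NTree n) (P : ∀ m : ℕ, Set (Fin (T.level m))) : Prop :=
  ∀ m (x : Fin (T.level (m + 1))), x ∈ P (m + 1) → T.ρ m x ∈ P m

/-- A subtree is pruned if every one of its vertices of height `m < n` has a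
preimage in the subtree: all its leaves are tips. -/
def IsPrunedSub {n : ℕ} (T : NTree n) (P : ∀ m : ℕ, Set (Fin (T.level m))) : Prop :=
  ∀ m, m < n → ∀ x ∈ P m, ∃ y ∈ P (m + 1), T.ρ m y = x

/-- `P` is the greatest pruned subtree contained in the subtree `C` of `T`. -/
def IsGreatestPrunedSub {n : ℕ} (T : NTree n)
    (C P : ∀ m : ℕ, Set (Fin (T.level m))) : Prop :=
  (∀ m, P m ⊆ C m) ∧ IsClosedSub T P ∧ IsPrunedSub T P ∧
    ∀ Q : ∀ m : ℕ, Set (Fin (T.level m)),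
      (∀ m, Q m ⊆ C m) → IsClosedSub T Q → IsPrunedSub T Q → ∀ m, Q m ⊆ P m

/-- The maximal pruned subtree: union of all closed pruned subtrees. -/
def maxPruned {n : ℕ} (T : NTree n) : ∀ m : ℕ, Set (Fin (T.level m)) :=
  fun m => {x | ∃ Q : ∀ m : ℕ, Set (Fin (T.level m)),
    IsClosedSub T Q ∧ IsPrunedSub T Q ∧ x ∈ Q m}

theorem maxPruned_greatest {n : ℕ} (T : NTree n) :
    IsGreatestPrunedSub T (fun _ => Set.univ) (maxPruned T) := by
  refine ⟨fun m => Set.subset_univ _, ?_, ?_, ?_⟩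
  · rintro m x ⟨Q, hc, hp, hx⟩
    exact ⟨Q, hc, hp, hc m x hx⟩
  · rintro m hm x ⟨Q, hc, hp, hx⟩
    obtain ⟨y, hy, hyx⟩ := hp m hm x hx
    exact ⟨y, ⟨Q, hc, hp, hy⟩, hyx⟩
  · intro Q _ hc hp m x hx
    exact ⟨Q, hc, hp, hx⟩

/-- Every `n`-tree `T` has a unique maximal pruned subtree `T^{(p)}`, and the
operation `(-)^{(p)}` is idempotent: the maximal pruned subtree of `T^{(p)}`
is `T^{(p)}` itself (so `(T^{(p)})^{(p)} = T^{(p)}`, as for an idempotent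
comonad). -/
theorem exists_unique_max_pruned_subtree {n : ℕ} (T : NTree n) :
    (∃! P : ∀ m : ℕ, Set (Fin (T.level m)),
        IsGreatestPrunedSub T (fun _ => Set.univ) P) ∧
      ∀ P, IsGreatestPrunedSub T (fun _ => Set.univ) P → IsGreatestPrunedSub T P P := by
  constructor
  · refine ⟨maxPruned T, maxPruned_greatest T, ?_⟩
    intro Q hQ
    funext m
    exact le_antisymm ((maxPruned_greatest T).2.2.2 Q hQ.1 hQ.2.1 hQ.2.2.1 m)
      (hQ.2.2.2 (maxPruned T) (maxPruned_greatest T).1 (maxPruned_greatest T).2.1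
        (maxPruned_greatest T).2.2.1 m)
  · intro P hP
    exact ⟨fun m => le_refl _, hP.2.1, hP.2.2.1,
      fun Q hQ _ _ m => hQ m⟩
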